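/- Let $\sigma: \mathfrak{g} \to \mathfrak{g}$ be linear with $\sigma(d) = d$, $\sigma(D_t^+) = \mu_t D_t^-$, $\sigma(D_t^-) = \mu_t^{-1} D_t^+$ for nonzero scalars $\mu_t$. If $\beta(t,s,r)\,\mu_t = \alpha(s,t,r)\,\mu_r\,\mu_s$ for all rooted trees $r, s, t$, then $\sigma$ is an anti-involution of the insertion-elimination Lie algebra $\mathfrak{g}$. -/

import Mathlib

namespace IE

/-- A rooted tree: a root together with a list of subtrees. -/
inductive RTree : Type
  | node : List RTree → RTree

namespace RTree

/-- Number of vertices of a rooted tree. -/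
def size : RTree → ℕ
  | node cs => 1 + (cs.attach.map (fun c => size c.1)).sum
decreasing_by
  have h1 := List.sizeOf_lt_of_mem c.2
  have h2 : sizeOf (RTree.node cs) = 1 + sizeOf cs := by simp
  omega

mutual
  /-- Positions (vertices) of a rooted tree, as index paths from the root. -/
  def pos : RTree → List (List ℕ)
    | node cs => [] :: posAux cs 0
  def posAux : List RTree → ℕ → List (List ℕ)
    | [], _ => []
    | c :: cs, i => (pos c).map (i :: ·) ++ posAux cs (i + 1)
end

theorem root_mem_pos (t : RTree) : [] ∈ pos t := by
  cases t with
  | node cs => simp [pos]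

/-- The subtree rooted at a given position. -/
def subtreeAt : List ℕ → RTree → RTree
  | [], t => t
  | i :: p, node cs =>
    match cs[i]? with
    | some c => subtreeAt p c
    | none => node cs

/-- The tree obtained by removing the subtree hanging at a given (non-root) position,
i.e. the root-side part `R_e` of the edge cut. -/
def removeAt : List ℕ → RTree → RTree
  | [], t => t
  | [i], node cs => node (cs.eraseIdx i)
  | i :: j :: p, node cs => node (cs.modify i (removeAt (j :: p)))

/-- `graft v t s` attaches the root of `s` by a new edge to the vertex `v` of `t`
(the operation `t ∪_v s`). -/
def graft : List ℕ → RTree → RTree → RTree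
  | [], node cs, s => node (cs ++ [s])
  | i :: p, node cs, s => node (cs.modify i (fun c => graft p c s))

/-- Adjacency of positions: one is the parent of the other. -/
def adj (p q : List ℕ) : Prop :=
  (p ≠ [] ∧ p.dropLast = q) ∨ (q ≠ [] ∧ q.dropLast = p)

/-- Rooted isomorphism: a bijection of vertex sets fixing the root and preserving
adjacency. -/
def Iso (s t : RTree) : Prop :=
  ∃ f : {p // p ∈ pos s} ≃ {p // p ∈ pos t},
    (f ⟨[], root_mem_pos s⟩).1 = [] ∧
      ∀ p q : {p // p ∈ pos s}, adj p.1 q.1 ↔ adj (f p).1 (f q).1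

/-- The number of root-fixing graph automorphisms of a rooted tree. -/
noncomputable def xi (t : RTree) : ℕ :=
  Nat.card {f : {p // p ∈ pos t} ≃ {p // p ∈ pos t} //
    (f ⟨[], root_mem_pos t⟩).1 = [] ∧
      ∀ p q : {p // p ∈ pos t}, adj p.1 q.1 ↔ adj (f p).1 (f q).1}

open Classical in
/-- `alpha t₁ t₂ t₃` = number of edges `e` of `t₂` (identified with the non-root
vertex below `e`) such that cutting `e` yields root part `R_e(t₂) ≅ t₃` and pruned
part `P_e(t₂) ≅ t₁`. -/
noncomputable def alpha (t1 t2 t3 : RTree) : ℕ :=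
  ((pos t2).filter fun v =>
    decide (v ≠ [] ∧ Iso (subtreeAt v t2) t1 ∧ Iso (removeAt v t2) t3)).length

open Classical in
/-- `beta t₁ t₂ t₃` = number of vertices `v` of `t₃` with `t₁ ≅ t₃ ∪_v t₂`. -/
noncomputable def beta (t1 t2 t3 : RTree) : ℕ :=
  ((pos t3).filter fun v => decide (Iso t1 (graft v t3 t2))).length


end RTree

open RTree

/-- Isomorphism classes of rooted trees. -/
def TreeCls : Type := Quot RTree.Iso

/-- The isomorphism class of a rooted tree. -/
def cls (t : RTree) : TreeCls := Quot.mk RTree.Iso t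

/-- The number of vertices of (a representative of) an isomorphism class. -/
noncomputable def TreeCls.size (a : TreeCls) : ℕ := RTree.size a.out

/-- `α` on isomorphism classes. -/
noncomputable def alphaQ (a b c : TreeCls) : ℕ := RTree.alpha a.out b.out c.out

/-- `β` on isomorphism classes. -/
noncomputable def betaQ (a b c : TreeCls) : ℕ := RTree.beta a.out b.out c.out

open scoped BigOperators Classical

/-- A realization of the insertion-elimination Lie algebra: a complex Lie algebra `L`
with distinguished basis `{d} ∪ {D_t^+ : t} ∪ {D_t^- : t}` (indexed by isomorphism
classes of rooted trees) satisfying the insertion-elimination relations. -/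
structure IEData (L : Type*) [LieRing L] [LieAlgebra ℂ L] where
  /-- the grading element -/
  d : L
  /-- the insertion (growth) generators `D_t^+` -/
  Dp : TreeCls → L
  /-- the elimination generators `D_t^-` -/
  Dm : TreeCls → L
  basis_indep : LinearIndependent ℂ
    (Sum.elim (fun _ : Unit => d) (Sum.elim Dp Dm) : Unit ⊕ (TreeCls ⊕ TreeCls) → L)
  basis_span : Submodule.span ℂ
    (Set.range (Sum.elim (fun _ : Unit => d) (Sum.elim Dp Dm) :
      Unit ⊕ (TreeCls ⊕ TreeCls) → L)) = ⊤
  bracket_d_p : ∀ t : TreeCls, ⁅d, Dp t⁆ = (t.size : ℂ) • Dp t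
  bracket_d_m : ∀ t : TreeCls, ⁅d, Dm t⁆ = -(t.size : ℂ) • Dm t
  bracket_p_p : ∀ s t : TreeCls, ⁅Dp s, Dp t⁆ =
    ∑ᶠ r : TreeCls, ((betaQ r s t : ℂ) - (betaQ r t s : ℂ)) • Dp r
  bracket_m_m : ∀ s t : TreeCls, ⁅Dm s, Dm t⁆ =
    ∑ᶠ r : TreeCls, ((alphaQ t r s : ℂ) - (alphaQ s r t : ℂ)) • Dm r
  bracket_m_p : ∀ s t : TreeCls, ⁅Dm s, Dp t⁆ =
    (∑ᶠ r : TreeCls, (alphaQ s t r : ℂ) • Dp r)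
      + (∑ᶠ r : TreeCls, (betaQ s t r : ℂ) • Dm r)
      + (if s = t then d else 0)

namespace IEData

variable {L : Type*} [LieRing L] [LieAlgebra ℂ L] (D : IEData L)

/-- The graded piece `𝔤_n` of the insertion-elimination algebra. -/
noncomputable def gdeg (n : ℤ) : Submodule ℂ L :=
  if 0 < n then Submodule.span ℂ {x | ∃ t : RTree, (RTree.size t : ℤ) = n ∧ x = D.Dp (cls t)}
  else if n < 0 then
    Submodule.span ℂ {x | ∃ t : RTree, (RTree.size t : ℤ) = -n ∧ x = D.Dm (cls t)}
  else Submodule.span ℂ {D.d}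

/-- The positive part `𝔤⁺ = ⊕_{n>0} 𝔤_n`. -/
noncomputable def gplus : Submodule ℂ L :=
  Submodule.span ℂ (Set.range D.Dp)

/-- The negative part `𝔤⁻ = ⊕_{n<0} 𝔤_n`. -/
noncomputable def gminus : Submodule ℂ L :=
  Submodule.span ℂ (Set.range D.Dm)

end IEData


section Aux

open Function

lemma exists_of_beta_ne_zero {t1 t2 t3 : RTree} (h : RTree.beta t1 t2 t3 ≠ 0) :
    ∃ v ∈ RTree.pos t3, RTree.Iso t1 (RTree.graft v t3 t2) := by
  classical
  by_contra hc
  push_neg at hc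
  apply h
  unfold RTree.beta
  rw [List.length_eq_zero_iff, List.filter_eq_nil_iff]
  intro v hv
  simp only [decide_eq_true_eq]
  exact hc v hv

lemma exists_of_alpha_ne_zero {t1 t2 t3 : RTree} (h : RTree.alpha t1 t2 t3 ≠ 0) :
    ∃ v ∈ RTree.pos t2, v ≠ [] ∧ RTree.Iso (RTree.subtreeAt v t2) t1 ∧
      RTree.Iso (RTree.removeAt v t2) t3 := by
  classical
  by_contra hc
  push_neg at hc
  apply h
  unfold RTree.alpha
  rw [List.length_eq_zero_iff, List.filter_eq_nil_iff]
  intro v hv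
  simp only [decide_eq_true_eq, not_and]
  intro h1 h2
  exact hc v hv h1 h2

lemma finite_betaQ_support (s t : TreeCls) : {r : TreeCls | betaQ r s t ≠ 0}.Finite := by
  apply Set.Finite.subset
    (((RTree.pos t.out).finite_toSet).image (fun v => cls (RTree.graft v t.out s.out)))
  intro r hr
  obtain ⟨v, hv, hiso⟩ := exists_of_beta_ne_zero hr
  exact ⟨v, hv, ((Quot.sound hiso).symm.trans (Quot.out_eq r))⟩

lemma finite_alphaQ_support (s t : TreeCls) : {r : TreeCls | alphaQ s t r ≠ 0}.Finite := by
  apply Set.Finite.subset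
    (((RTree.pos t.out).finite_toSet).image (fun v => cls (RTree.removeAt v t.out)))
  intro r hr
  obtain ⟨v, hv, _, _, hiso⟩ := exists_of_alpha_ne_zero hr
  exact ⟨v, hv, ((Quot.sound hiso).trans (Quot.out_eq r))⟩

lemma lmap_finsum {L : Type*} [AddCommGroup L] [Module ℂ L] {ι : Type*}
    (σ : L →ₗ[ℂ] L) {f : ι → L} (hf : (Function.support f).Finite) :
    σ (∑ᶠ i, f i) = ∑ᶠ i, σ (f i) :=
  σ.toAddMonoidHom.map_finsum hf

end Aux

/-- If `σ` is linear with `σ(d) = d`, `σ(D_t^+) = μ_t D_t^-`, `σ(D_t^-) = μ_t⁻¹ D_t^+`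
for nonzero scalars `μ_t`, and `β(t,s,r) μ_t = α(s,t,r) μ_r μ_s` for all rooted
trees `r, s, t`, then `σ` is an anti-involution of the insertion-elimination
Lie algebra. -/
theorem sigma_anti_involution_of_mu {L : Type*} [LieRing L] [LieAlgebra ℂ L]
    (D : IEData L) (μ : TreeCls → ℂ) (hμ : ∀ a : TreeCls, μ a ≠ 0)
    (σ : L →ₗ[ℂ] L)
    (hd : σ D.d = D.d)
    (hp : ∀ t : TreeCls, σ (D.Dp t) = μ t • D.Dm t)
    (hm : ∀ t : TreeCls, σ (D.Dm t) = (μ t)⁻¹ • D.Dp t)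
    (hrel : ∀ r s t : RTree,
      (RTree.beta t s r : ℂ) * μ (cls t) =
        (RTree.alpha s t r : ℂ) * (μ (cls r) * μ (cls s))) :
    (∀ x : L, σ (σ x) = x) ∧ ∀ a b : L, σ ⁅a, b⁆ = ⁅σ b, σ a⁆ := by
  classical
  -- the relation on isomorphism classes
  have hrelQ : ∀ a b c : TreeCls,
      (betaQ c b a : ℂ) * μ c = (alphaQ b c a : ℂ) * (μ a * μ b) := by
    intro a b c
    have h := hrel a.out b.out c.out
    rw [show cls a.out = a from Quot.out_eq a, show cls b.out = b from Quot.out_eq b,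
      show cls c.out = c from Quot.out_eq c] at h
    exact h
  -- finiteness of various supports
  have finB : ∀ s t : TreeCls, {r : TreeCls | betaQ r s t ≠ 0}.Finite := finite_betaQ_support
  have finA3 : ∀ s t : TreeCls, {r : TreeCls | alphaQ s t r ≠ 0}.Finite := finite_alphaQ_support
  have finAmid : ∀ a b : TreeCls, {r : TreeCls | alphaQ a r b ≠ 0}.Finite := by
    intro a b
    apply (finB a b).subset
    intro r hr
    simp only [Set.mem_setOf_eq] at hr ⊢
    intro h0
    have h1 : (betaQ r a b : ℂ) = 0 := by exact_mod_cast congrArg (Nat.cast (R := ℂ)) h0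
    have h2 := hrelQ b a r
    rw [h1, zero_mul] at h2
    rcases mul_eq_zero.mp h2.symm with h | h
    · exact hr (by exact_mod_cast h)
    · exact absurd h (mul_ne_zero (hμ b) (hμ a))
  have finBr : ∀ a b : TreeCls, {r : TreeCls | betaQ a b r ≠ 0}.Finite := by
    intro a b
    apply (finA3 b a).subset
    intro r hr
    simp only [Set.mem_setOf_eq] at hr ⊢
    intro h0
    have h1 : (alphaQ b a r : ℂ) = 0 := by exact_mod_cast congrArg (Nat.cast (R := ℂ)) h0
    have h2 := hrelQ r b a
    rw [h1, zero_mul] at h2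
    rcases mul_eq_zero.mp h2 with h | h
    · exact hr (by exact_mod_cast h)
    · exact absurd h (hμ a)
  -- helper for support finiteness of coefficient families
  have suppP : ∀ (f : TreeCls → ℂ), {r | f r ≠ 0}.Finite →
      (Function.support fun r => f r • D.Dp r).Finite := by
    intro f hf
    exact hf.subset (Function.support_smul_subset_left f D.Dp)
  have suppM : ∀ (f : TreeCls → ℂ), {r | f r ≠ 0}.Finite →
      (Function.support fun r => f r • D.Dm r).Finite := by
    intro f hf
    exact hf.subset (Function.support_smul_subset_left f D.Dm)
  have castfin : ∀ (g : TreeCls → ℕ), {r | g r ≠ 0}.Finite →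
      {r | (g r : ℂ) ≠ 0}.Finite := by
    intro g hg
    apply hg.subset
    intro r hr
    simp only [Set.mem_setOf_eq] at hr ⊢
    exact fun h0 => hr (by exact_mod_cast congrArg (Nat.cast (R := ℂ)) h0)
  have subfin : ∀ (g h : TreeCls → ℕ), {r | g r ≠ 0}.Finite → {r | h r ≠ 0}.Finite →
      {r | (g r : ℂ) - (h r : ℂ) ≠ 0}.Finite := by
    intro g h hg hh
    apply Set.Finite.subset ((castfin g hg).union (castfin h hh))
    intro r hr
    simp only [Set.mem_setOf_eq, Set.mem_union] at hr ⊢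
    by_contra hc
    push_neg at hc
    obtain ⟨h1, h2⟩ := hc
    exact hr (by rw [h1, h2, sub_zero])
  -- Part 1 : σ ∘ σ = id
  have hinv : ∀ x : L, σ (σ x) = x := by
    have hbase : ∀ i : Unit ⊕ (TreeCls ⊕ TreeCls),
        σ (σ ((Sum.elim (fun _ : Unit => D.d) (Sum.elim D.Dp D.Dm)) i)) =
          (Sum.elim (fun _ : Unit => D.d) (Sum.elim D.Dp D.Dm)) i := by
      rintro (u | t | t)
      · simpa using by rw [hd, hd]
      · simp only [Sum.elim_inl, Sum.elim_inr]
        rw [hp, map_smul, hm, smul_smul, mul_inv_cancel₀ (hμ t), one_smul]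
      · simp only [Sum.elim_inl, Sum.elim_inr]
        rw [hm, map_smul, hp, smul_smul, inv_mul_cancel₀ (hμ t), one_smul]
    intro x
    have hx : x ∈ Submodule.span ℂ
        (Set.range (Sum.elim (fun _ : Unit => D.d) (Sum.elim D.Dp D.Dm))) := by
      rw [D.basis_span]; exact Submodule.mem_top
    refine Submodule.span_induction (p := fun y _ => σ (σ y) = y) ?_ ?_ ?_ ?_ hx
    · rintro y ⟨i, rfl⟩; exact hbase i
    · simp
    · intro y z _ _ h1 h2; rw [map_add, map_add, h1, h2]
    · intro c y _ h1; rw [map_smul, map_smul, h1]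
  -- Part 2 : anti-homomorphism, first on basis elements
  have genPP : ∀ s t : TreeCls, σ ⁅D.Dp s, D.Dp t⁆ = ⁅σ (D.Dp t), σ (D.Dp s)⁆ := by
    intro s t
    rw [D.bracket_p_p s t,
      lmap_finsum σ (suppP _ (subfin _ _ (finB s t) (finB t s))),
      hp t, hp s, smul_lie, lie_smul, smul_smul, D.bracket_m_m t s,
      smul_finsum' _ (suppM _ (subfin _ _ (finAmid s t) (finAmid t s)))]
    refine finsum_congr fun r => ?_
    rw [map_smul, hp r, smul_smul, smul_smul]
    congr 1
    have h1 := hrelQ t s r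
    have h2 := hrelQ s t r
    linear_combination h1 - h2
  have genMM : ∀ s t : TreeCls, σ ⁅D.Dm s, D.Dm t⁆ = ⁅σ (D.Dm t), σ (D.Dm s)⁆ := by
    intro s t
    rw [D.bracket_m_m s t,
      lmap_finsum σ (suppM _ (subfin _ _ (finAmid t s) (finAmid s t))),
      hm t, hm s, smul_lie, lie_smul, smul_smul, D.bracket_p_p t s,
      smul_finsum' _ (suppP _ (subfin _ _ (finB t s) (finB s t)))]
    refine finsum_congr fun r => ?_
    rw [map_smul, hm r, smul_smul, smul_smul]
    congr 1
    have h1 := hrelQ s t r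
    have h2 := hrelQ t s r
    have hr0 := hμ r; have hs0 := hμ s; have ht0 := hμ t
    field_simp
    linear_combination h2 - h1
  have genMP : ∀ s t : TreeCls, σ ⁅D.Dm s, D.Dp t⁆ = ⁅σ (D.Dp t), σ (D.Dm s)⁆ := by
    intro s t
    rw [D.bracket_m_p s t, map_add, map_add,
      lmap_finsum σ (suppP _ (castfin _ (finA3 s t))),
      lmap_finsum σ (suppM _ (castfin _ (finBr s t))),
      hp t, hm s, smul_lie, lie_smul, smul_smul, D.bracket_m_p t s, smul_add, smul_add,
      smul_finsum' _ (suppP _ (castfin _ (finA3 t s))),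
      smul_finsum' _ (suppM _ (castfin _ (finBr t s)))]
    have e1 : (∑ᶠ r, σ ((alphaQ s t r : ℂ) • D.Dp r)) =
        ∑ᶠ r, (μ t * (μ s)⁻¹) • ((betaQ t s r : ℂ) • D.Dm r) := by
      refine finsum_congr fun r => ?_
      rw [map_smul, hp r, smul_smul, smul_smul]
      congr 1
      have h1 := hrelQ r s t
      have hr0 := hμ r; have hs0 := hμ s; have ht0 := hμ t
      field_simp
      linear_combination -h1
    have e2 : (∑ᶠ r, σ ((betaQ s t r : ℂ) • D.Dm r)) =
        ∑ᶠ r, (μ t * (μ s)⁻¹) • ((alphaQ t s r : ℂ) • D.Dp r) := by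
      refine finsum_congr fun r => ?_
      rw [map_smul, hm r, smul_smul, smul_smul]
      congr 1
      have h1 := hrelQ r t s
      have hr0 := hμ r; have hs0 := hμ s; have ht0 := hμ t
      field_simp
      linear_combination h1
    have e3 : σ (if s = t then D.d else 0) =
        (μ t * (μ s)⁻¹) • (if t = s then D.d else 0) := by
      by_cases h : s = t
      · subst h
        simp [hd, mul_inv_cancel₀ (hμ s)]
      · simp [h, Ne.symm h]
    rw [e1, e2, e3]
    simp only [smul_smul]
    abel
  have hsymm : ∀ a b : L, σ ⁅a, b⁆ = ⁅σ b, σ a⁆ → σ ⁅b, a⁆ = ⁅σ a, σ b⁆ := by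
    intro a b h
    have hba : ⁅b, a⁆ = -⁅a, b⁆ := (lie_skew b a).symm
    rw [hba, map_neg, h]
    exact lie_skew (σ a) (σ b)
  have gen : ∀ i j : Unit ⊕ (TreeCls ⊕ TreeCls),
      σ ⁅(Sum.elim (fun _ : Unit => D.d) (Sum.elim D.Dp D.Dm)) i,
         (Sum.elim (fun _ : Unit => D.d) (Sum.elim D.Dp D.Dm)) j⁆ =
      ⁅σ ((Sum.elim (fun _ : Unit => D.d) (Sum.elim D.Dp D.Dm)) j),
       σ ((Sum.elim (fun _ : Unit => D.d) (Sum.elim D.Dp D.Dm)) i)⁆ := by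
    have gdp : ∀ t : TreeCls, σ ⁅D.d, D.Dp t⁆ = ⁅σ (D.Dp t), σ D.d⁆ := by
      intro t
      rw [D.bracket_d_p, map_smul, hp, hd, smul_lie,
        show ⁅D.Dm t, D.d⁆ = -⁅D.d, D.Dm t⁆ from (lie_skew _ _).symm,
        D.bracket_d_m]
      simp [smul_smul, mul_comm]
    have gdm : ∀ t : TreeCls, σ ⁅D.d, D.Dm t⁆ = ⁅σ (D.Dm t), σ D.d⁆ := by
      intro t
      rw [D.bracket_d_m, map_smul, hm, hd, smul_lie,
        show ⁅D.Dp t, D.d⁆ = -⁅D.d, D.Dp t⁆ from (lie_skew _ _).symm,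
        D.bracket_d_p]
      simp [smul_smul, mul_comm]
    rintro (u | s | s) (v | t | t) <;>
      simp only [Sum.elim_inl, Sum.elim_inr]
    · rw [lie_self, map_zero, lie_self]
    · exact gdp t
    · exact gdm t
    · exact hsymm _ _ (gdp s)
    · exact genPP s t
    · exact hsymm _ _ (genMP t s)
    · exact hsymm _ _ (gdm s)
    · exact genMP s t
    · exact genMM s t
  -- extend to all of L by bilinearity
  have hanti : ∀ a b : L, σ ⁅a, b⁆ = ⁅σ b, σ a⁆ := by
    have hspan : ∀ x : L, x ∈ Submodule.span ℂ
        (Set.range (Sum.elim (fun _ : Unit => D.d) (Sum.elim D.Dp D.Dm))) := by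
      intro x; rw [D.basis_span]; exact Submodule.mem_top
    intro a b
    refine Submodule.span_induction
      (p := fun a _ => ∀ b : L, σ ⁅a, b⁆ = ⁅σ b, σ a⁆) ?_ ?_ ?_ ?_ (hspan a) b
    · rintro x ⟨i, rfl⟩ b
      refine Submodule.span_induction
        (p := fun b _ => σ ⁅_, b⁆ = ⁅σ b, σ _⁆) ?_ ?_ ?_ ?_ (hspan b)
      · rintro y ⟨j, rfl⟩; exact gen i j
      · simp
      · intro y z _ _ h1 h2
        rw [lie_add, map_add, h1, h2, map_add, add_lie]
      · intro c y _ h1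
        rw [lie_smul, map_smul, h1, map_smul, smul_lie]
    · intro b; simp
    · intro x y _ _ h1 h2 b
      rw [add_lie, map_add, h1 b, h2 b, map_add, lie_add]
    · intro c x _ h1 b
      rw [smul_lie, map_smul, h1 b, map_smul, lie_smul]
  exact ⟨hinv, hanti⟩


end IE
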